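/- For a Gaussian random variable X₁ ~ N(μ, σ²), the truncated variance c ↦ Var[X₁ | X₁ ≤ c] is strictly increasing in c and satisfies 0 < Var[X₁ | X₁ ≤ c] < σ² for every c ∈ ℝ. -/

import Mathlib

open MeasureTheory Set

/-- Gaussian density with mean `a` and variance `s2`. -/
noncomputable def gauss (a s2 x : ℝ) : ℝ :=
  (Real.sqrt (2 * Real.pi * s2))⁻¹ * Real.exp (-(x - a) ^ 2 / (2 * s2))

/-- Mean of a `N(a, s2)` random variable truncated above at `c`, i.e. `E[X | X ≤ c]`. -/
noncomputable def truncMean (a s2 c : ℝ) : ℝ :=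
  (∫ x in Iic c, x * gauss a s2 x) / (∫ x in Iic c, gauss a s2 x)

/-- Variance of a `N(a, s2)` random variable truncated above at `c`, i.e. `Var[X | X ≤ c]`. -/
noncomputable def truncVar (a s2 c : ℝ) : ℝ :=
  (∫ x in Iic c, x ^ 2 * gauss a s2 x) / (∫ x in Iic c, gauss a s2 x) - truncMean a s2 c ^ 2

/-!
Write `M_k(c) = ∫_{-∞}^c x^k g` for the Gaussian density `g`, so that
`V(c) = Var[X | X ≤ c] = (M₂M₀ - M₁²) / M₀²` and `V'(c) = g(c) (2 J₁² - J₀ J₂) / M₀³`, where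
`J_k = ∫_{y > 0} y^k g(c - y) dy` are the moments of the overshoot `c - X` on `{X ≤ c}`.
Symmetrizing, `2 (2 J₁² - J₀ J₂) = ∬_{u, v > 0} (4uv - u² - v²) g(c - u) g(c - v)`. On each line
`u + v = p` the product `g(c - u) g(c - v)` is a multiple of `exp(-(u - v)² / 4σ²)`, a weight
decreasing in `|u - v|`, while the kernel has mean zero on the segment; so each line contributes
a positive amount.
The bounds `0 < V < σ²` come from `∫ (x - m)² g > 0` and the Gaussian integration by parts
identities `M₁ = a M₀ - σ² g(c)`, `M₂ = a M₁ + σ² M₀ - σ² c g(c)`.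
-/

open Filter ProbabilityTheory

lemma setIntegral_pos_of_ae_pos {X : Type*} [MeasurableSpace X] {μ : Measure X} {f : X → ℝ}
    {s : Set X} (hμs : μ s ≠ 0) (hf : IntegrableOn f s μ) (hpos : ∀ᵐ x ∂μ.restrict s, 0 < f x) :
    0 < ∫ x in s, f x ∂μ := by
  have hnonneg : 0 ≤ᵐ[μ.restrict s] f := hpos.mono fun _ hx => hx.le
  refine (integral_nonneg_of_ae hnonneg).lt_of_ne fun h => ?_
  have hzero := (integral_eq_zero_iff_of_nonneg_ae hnonneg hf).1 h.symm
  have := ae_restrict_neBot.2 hμs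
  obtain ⟨x, hx, hx0⟩ := (hpos.and hzero).exists
  exact hx.ne' hx0

lemma integral_Iic_eq_integral_Ioi_sub (h : ℝ → ℝ) (c : ℝ) :
    ∫ x in Iic c, h x = ∫ y in Ioi 0, h (c - y) := by
  have := (volume.measurePreserving_sub_left c).setIntegral_preimage_emb
    (measurableEmbedding_subLeft c) h (Iic c)
  rw [← integral_Ici_eq_integral_Ioi, ← this]
  congr 1
  ext y
  simp

lemma hasDerivAt_integral_Iic {f : ℝ → ℝ} (hf : Continuous f) (hfi : Integrable f) (c : ℝ) :
    HasDerivAt (fun x => ∫ t in Iic x, f t) (f c) c := by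
  have hsplit : (fun x => ∫ t in Iic x, f t) = fun x => (∫ t in Iic 0, f t) + ∫ t in 0..x, f t := by
    ext x
    rw [← intervalIntegral.integral_Iic_sub_Iic hfi.integrableOn hfi.integrableOn]
    ring
  rw [hsplit]
  exact (intervalIntegral.integral_hasDerivAt_right (hf.intervalIntegrable _ _)
    hf.aestronglyMeasurable.stronglyMeasurableAtFilter hf.continuousAt).const_add _

lemma integral_Iic_eq_of_hasDerivAt {f f' : ℝ → ℝ} (hderiv : ∀ x, HasDerivAt f (f' x) x)
    (hf : Integrable f) (hf' : Integrable f') (c : ℝ) : ∫ x in Iic c, f' x = f c := by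
  rw [integral_Iic_of_hasDerivAt_of_tendsto' (fun x _ => hderiv x) hf'.integrableOn
    (tendsto_zero_of_hasDerivAt_of_integrableOn_Iic (a := c) (fun x _ => hderiv x)
      hf'.integrableOn hf.integrableOn), sub_zero]

lemma integral_sq_sub_three_mul_sq_mul_exp_pos {r s : ℝ} (hr : 0 < r) (hs : 0 < s) :
    0 < ∫ t in -r..r, (r ^ 2 - 3 * t ^ 2) * Real.exp (-t ^ 2 / s) := by
  set e : ℝ → ℝ := fun t => Real.exp (-t ^ 2 / s)
  -- integrate by parts against the antiderivative `r²t - t³`, which vanishes at `±r`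
  have hderiv : ∀ t, HasDerivAt (fun t => (r ^ 2 * t - t ^ 3) * e t)
      ((r ^ 2 - 3 * t ^ 2) * e t - 2 / s * (t ^ 2 * (r ^ 2 - t ^ 2) * e t)) t := by
    intro t
    have he : HasDerivAt e (-(2 * t) / s * e t) t := by
      simpa [e, mul_comm, neg_div] using ((hasDerivAt_pow 2 t).neg.div_const s).exp
    refine ((((hasDerivAt_id t).const_mul (r ^ 2)).sub (hasDerivAt_pow 3 t)).mul he).congr_deriv ?_
    simp only [id, Pi.sub_apply]
    field_simp
    ring
  have hibp := intervalIntegral.integral_eq_sub_of_hasDerivAt (a := -r) (b := r)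
    (fun t _ => hderiv t) ((by fun_prop : Continuous _).intervalIntegrable _ _)
  rw [intervalIntegral.integral_sub ((by fun_prop : Continuous _).intervalIntegrable _ _)
    ((by fun_prop : Continuous _).intervalIntegrable _ _),
    intervalIntegral.integral_const_mul] at hibp
  have hbdry : (r ^ 2 * r - r ^ 3) * e r - (r ^ 2 * -r - (-r) ^ 3) * e (-r) = 0 := by ring
  have hpos : 0 < ∫ t in -r..r, t ^ 2 * (r ^ 2 - t ^ 2) * e t := by
    rw [intervalIntegral.integral_of_le (by linarith)]
    refine setIntegral_pos_of_ae_pos (by simp; linarith)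
      (by fun_prop : Continuous _).integrableOn_Ioc ?_
    filter_upwards [ae_restrict_mem measurableSet_Ioc, ae_restrict_of_ae (volume.ae_ne 0),
      ae_restrict_of_ae (volume.ae_ne r)] with t ht ht0 htr
    have : 0 < r ^ 2 - t ^ 2 := by nlinarith [ht.1, lt_of_le_of_ne ht.2 htr]
    have : 0 < t ^ 2 := by positivity
    positivity
  have : 0 < 2 / s * ∫ t in -r..r, t ^ 2 * (r ^ 2 - t ^ 2) * e t := by positivity
  linarith

/-- `2 (2 J₁² - J₀ J₂)`, with `J_k = ∫_{y > 0} y^k w`, is the integral of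
`(4uv - u² - v²) w(u) w(v)` over the quadrant, regrouped by `integral_posConvolution` along the
lines `u + v = p`. -/
lemma integral_Ioi_mul_lt_two_mul_sq_of_kernel_pos {w : ℝ → ℝ} (hw : Continuous w)
    (h0 : IntegrableOn w (Ioi 0)) (h1 : IntegrableOn (fun y => y * w y) (Ioi 0))
    (h2 : IntegrableOn (fun y => y ^ 2 * w y) (Ioi 0))
    (hkernel : ∀ p, 0 < p →
      0 < ∫ t in 0..p, (4 * t * (p - t) - t ^ 2 - (p - t) ^ 2) * (w t * w (p - t))) :
    (∫ y in Ioi 0, w y) * (∫ y in Ioi 0, y ^ 2 * w y) < 2 * (∫ y in Ioi 0, y * w y) ^ 2 := by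
  have hconv {f g : ℝ → ℝ} (hf : IntegrableOn f (Ioi 0)) (hg : IntegrableOn g (Ioi 0)) :
      IntegrableOn (fun p => ∫ t in 0..p, f t * g (p - t)) (Ioi 0) ∧
        ∫ p in Ioi 0, ∫ t in 0..p, f t * g (p - t) = (∫ y in Ioi 0, f y) * ∫ y in Ioi 0, g y :=
    ⟨(integrable_indicator_iff measurableSet_Ioi).1
      (integrable_posConvolution (μ := volume) (ν := volume) hf hg (ContinuousLinearMap.mul ℝ ℝ)),
      integral_posConvolution hf hg (ContinuousLinearMap.mul ℝ ℝ)⟩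
  obtain ⟨i11, e11⟩ := hconv h1 h1
  obtain ⟨i20, e20⟩ := hconv h2 h0
  obtain ⟨i02, e02⟩ := hconv h0 h2
  set I11 := fun p => ∫ t in 0..p, t * w t * ((p - t) * w (p - t))
  set I20 := fun p => ∫ t in 0..p, t ^ 2 * w t * w (p - t)
  set I02 := fun p => ∫ t in 0..p, w t * ((p - t) ^ 2 * w (p - t))
  have hinner (p : ℝ) :
      ∫ t in 0..p, (4 * t * (p - t) - t ^ 2 - (p - t) ^ 2) * (w t * w (p - t)) =
        4 * I11 p - I20 p - I02 p := by
    have hc {f : ℝ → ℝ} (hf : Continuous f) : IntervalIntegrable f volume 0 p :=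
      hf.intervalIntegrable _ _
    rw [← intervalIntegral.integral_const_mul, ← intervalIntegral.integral_sub (hc (by fun_prop))
      (hc (by fun_prop)), ← intervalIntegral.integral_sub (hc (by fun_prop)) (hc (by fun_prop))]
    congr 1 with t
    ring
  have hpos : 0 < ∫ p in Ioi 0, (4 * I11 p - I20 p - I02 p) := by
    refine setIntegral_pos_of_ae_pos (by simp) (((i11.const_mul 4).sub i20).sub i02) ?_
    filter_upwards [ae_restrict_mem measurableSet_Ioi] with p hp
    exact hinner p ▸ hkernel p hp
  rw [integral_sub (f := fun p => 4 * I11 p - I20 p) ((i11.const_mul 4).sub i20) i02,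
    integral_sub (f := fun p => 4 * I11 p) (i11.const_mul 4) i20, integral_const_mul,
    e11, e20, e02] at hpos
  linarith

noncomputable def lowerMoment (f : ℝ → ℝ) (k : ℕ) (c : ℝ) : ℝ := ∫ x in Iic c, x ^ k * f x

section LowerMoment
variable {f : ℝ → ℝ}

lemma integrable_quadratic_mul (hfi : ∀ k ≤ 2, Integrable fun x => x ^ k * f x) (p q r : ℝ) :
    Integrable fun x => (p * x ^ 2 + q * x + r) * f x := by
  have h := (((hfi 2 le_rfl).const_mul p).add ((hfi 1 (by norm_num)).const_mul q)).add
    ((hfi 0 (by norm_num)).const_mul r)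
  refine h.congr (Eventually.of_forall fun x => ?_)
  simp only [Pi.add_apply]
  ring

lemma integral_Iic_quadratic_mul (hfi : ∀ k ≤ 2, Integrable fun x => x ^ k * f x)
    (p q r c : ℝ) :
    ∫ x in Iic c, (p * x ^ 2 + q * x + r) * f x =
      p * lowerMoment f 2 c + q * lowerMoment f 1 c + r * lowerMoment f 0 c := by
  have hi (k : ℕ) (hk : k ≤ 2) (m : ℝ) : IntegrableOn (fun x => m * (x ^ k * f x)) (Iic c) :=
    ((hfi k hk).const_mul m).integrableOn
  have hsplit : ∀ x, (p * x ^ 2 + q * x + r) * f x =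
      p * (x ^ 2 * f x) + q * (x ^ 1 * f x) + r * (x ^ 0 * f x) := fun x => by ring
  simp_rw [hsplit]
  rw [integral_add ?_ (hi 0 (by norm_num) r), integral_add (hi 2 le_rfl p) (hi 1 (by norm_num) q),
    integral_const_mul, integral_const_mul, integral_const_mul]
  · rfl
  · exact (hi 2 le_rfl p).add (hi 1 (by norm_num) q)

lemma integral_Ioi_quadratic_mul_sub (hfi : ∀ k ≤ 2, Integrable fun x => x ^ k * f x)
    (p q r c : ℝ) :
    ∫ y in Ioi 0, (p * y ^ 2 + q * y + r) * f (c - y) =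
      p * lowerMoment f 2 c - (2 * p * c + q) * lowerMoment f 1 c
        + (p * c ^ 2 + q * c + r) * lowerMoment f 0 c := by
  have h := integral_Iic_eq_integral_Ioi_sub
    (fun x => (p * (c - x) ^ 2 + q * (c - x) + r) * f x) c
  simp only [sub_sub_cancel] at h
  rw [← h]
  simp_rw [show ∀ x, p * (c - x) ^ 2 + q * (c - x) + r
    = p * x ^ 2 + -(2 * p * c + q) * x + (p * c ^ 2 + q * c + r) from fun x => by ring]
  rw [integral_Iic_quadratic_mul hfi]
  ring

lemma hasDerivAt_lowerMoment (hf : Continuous f) {k : ℕ} (hfk : Integrable fun x => x ^ k * f x)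
    (c : ℝ) : HasDerivAt (lowerMoment f k) (c ^ k * f c) c :=
  hasDerivAt_integral_Iic (by fun_prop) hfk c

lemma hasDerivAt_lowerMoment_variance (hf : Continuous f)
    (hfi : ∀ k ≤ 2, Integrable fun x => x ^ k * f x) {c : ℝ} (hc : lowerMoment f 0 c ≠ 0) :
    HasDerivAt (fun x =>
        (lowerMoment f 2 x * lowerMoment f 0 x - lowerMoment f 1 x ^ 2) / lowerMoment f 0 x ^ 2)
      (f c * (2 * (c * lowerMoment f 0 c - lowerMoment f 1 c) ^ 2 - lowerMoment f 0 c *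
        (c ^ 2 * lowerMoment f 0 c - 2 * c * lowerMoment f 1 c + lowerMoment f 2 c))
        / lowerMoment f 0 c ^ 3) c := by
  have h0 := hasDerivAt_lowerMoment hf (hfi 0 (by norm_num)) c
  have h1 := hasDerivAt_lowerMoment hf (hfi 1 (by norm_num)) c
  have h2 := hasDerivAt_lowerMoment hf (hfi 2 le_rfl) c
  refine (((h2.mul h0).sub (h1.pow 2)).div (h0.pow 2) (pow_ne_zero 2 hc)).congr_deriv ?_
  simp only [Pi.mul_apply, Pi.sub_apply, Pi.pow_apply]
  field_simp
  ring

end LowerMoment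

section Gaussian
variable {a s2 : ℝ}

lemma gauss_eq_gaussianPDFReal (a : ℝ) (hs : 0 ≤ s2) :
    gauss a s2 = gaussianPDFReal a s2.toNNReal := by
  ext x
  simp [gauss, gaussianPDFReal, Real.coe_toNNReal _ hs]

lemma gauss_pos (hs : 0 < s2) (x : ℝ) : 0 < gauss a s2 x := by
  rw [gauss_eq_gaussianPDFReal a hs.le]
  exact gaussianPDFReal_pos _ _ _ (by simpa using hs)

lemma continuous_gauss : Continuous (gauss a s2) := by
  unfold gauss
  fun_prop

lemma integrable_pow_mul_gauss (hs : 0 < s2) (k : ℕ) :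
    Integrable fun x => x ^ k * gauss a s2 x := by
  rw [gauss_eq_gaussianPDFReal a hs.le]
  rcases k.eq_zero_or_pos with rfl | hk
  · simpa using integrable_gaussianPDFReal a _
  have h := (memLp_id_gaussianReal (μ := a) (v := s2.toNNReal) k).integrable_norm_pow hk.ne'
  rw [gaussianReal_of_var_ne_zero _ (by simpa using hs), gaussianPDF_def,
    integrable_withDensity_iff_integrable_smul' (by fun_prop) (by simp)] at h
  refine h.norm.mono' (by fun_prop) (Eventually.of_forall fun x => ?_)
  simp [ENNReal.toReal_ofReal (gaussianPDFReal_nonneg _ _ _), mul_comm]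

lemma hasDerivAt_gauss (hs : s2 ≠ 0) (x : ℝ) :
    HasDerivAt (gauss a s2) (-(x - a) / s2 * gauss a s2 x) x := by
  have h := ((((hasDerivAt_id x).sub_const a).fun_pow 2).neg.div_const (2 * s2)).exp.const_mul
    (Real.sqrt (2 * Real.pi * s2))⁻¹
  refine h.congr_deriv ?_
  simp only [gauss, id, Pi.neg_apply]
  field_simp
  ring

lemma gauss_sub (c y : ℝ) : gauss a s2 (c - y) = gauss (c - a) s2 y := by
  simp only [gauss]
  ring_nf

lemma gauss_add_mul_gauss_sub (b r t : ℝ) :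
    gauss b s2 (r + t) * gauss b s2 (r - t) = gauss b s2 r ^ 2 * Real.exp (-t ^ 2 / s2) := by
  simp only [gauss, mul_pow, ← Real.exp_nat_mul]
  rw [mul_mul_mul_comm, ← Real.exp_add, ← sq, mul_assoc (_ ^ 2), ← Real.exp_add]
  ring_nf

lemma lowerMoment_one_gauss (hs : 0 < s2) (c : ℝ) :
    lowerMoment (gauss a s2) 1 c = a * lowerMoment (gauss a s2) 0 c - s2 * gauss a s2 c := by
  have hfi : ∀ k ≤ 2, Integrable fun x => x ^ k * gauss a s2 x :=
    fun k _ => integrable_pow_mul_gauss hs k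
  have h := integral_Iic_eq_of_hasDerivAt (f := fun x => -(s2 * gauss a s2 x))
    (fun x => ((hasDerivAt_gauss hs.ne' x).const_mul s2).neg.congr_deriv
      (by field_simp; ring : _ = (0 * x ^ 2 + 1 * x + -a) * gauss a s2 x))
    (by simpa using ((integrable_pow_mul_gauss (a := a) hs 0).const_mul s2).neg)
    (integrable_quadratic_mul hfi 0 1 (-a)) c
  rw [integral_Iic_quadratic_mul hfi] at h
  linarith

lemma lowerMoment_two_gauss (hs : 0 < s2) (c : ℝ) :
    lowerMoment (gauss a s2) 2 c =
      a * lowerMoment (gauss a s2) 1 c + s2 * lowerMoment (gauss a s2) 0 c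
        - s2 * c * gauss a s2 c := by
  have hfi : ∀ k ≤ 2, Integrable fun x => x ^ k * gauss a s2 x :=
    fun k _ => integrable_pow_mul_gauss hs k
  have h := integral_Iic_eq_of_hasDerivAt (f := fun x => -(s2 * (x * gauss a s2 x)))
    (fun x => (((hasDerivAt_id x).mul (hasDerivAt_gauss hs.ne' x)).const_mul s2).neg.congr_deriv
      (by simp only [id]; field_simp; ring : _ = (1 * x ^ 2 + -a * x + -s2) * gauss a s2 x))
    (by simpa using ((integrable_pow_mul_gauss (a := a) hs 1).const_mul s2).neg)
    (integrable_quadratic_mul hfi 1 (-a) (-s2)) c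
  rw [integral_Iic_quadratic_mul hfi] at h
  linarith

lemma integral_moment_kernel_gauss_pos (b : ℝ) (hs : 0 < s2) {p : ℝ} (hp : 0 < p) :
    0 < ∫ t in 0..p,
      (4 * t * (p - t) - t ^ 2 - (p - t) ^ 2) * (gauss b s2 t * gauss b s2 (p - t)) := by
  have hshift := intervalIntegral.integral_comp_add_left (a := -(p / 2)) (b := p / 2)
    (fun t => (4 * t * (p - t) - t ^ 2 - (p - t) ^ 2) * (gauss b s2 t * gauss b s2 (p - t)))
    (p / 2)
  rw [show p / 2 + -(p / 2) = 0 by ring, show p / 2 + p / 2 = p by ring] at hshift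
  have hsym (t : ℝ) :
      (4 * (p / 2 + t) * (p - (p / 2 + t)) - (p / 2 + t) ^ 2 - (p - (p / 2 + t)) ^ 2) *
          (gauss b s2 (p / 2 + t) * gauss b s2 (p - (p / 2 + t))) =
        2 * gauss b s2 (p / 2) ^ 2 * (((p / 2) ^ 2 - 3 * t ^ 2) * Real.exp (-t ^ 2 / s2)) := by
    rw [show p - (p / 2 + t) = p / 2 - t by ring, gauss_add_mul_gauss_sub]
    ring
  rw [← hshift]
  simp_rw [hsym]
  rw [intervalIntegral.integral_const_mul]
  have hg := gauss_pos (a := b) hs (p / 2)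
  exact mul_pos (by positivity) (integral_sq_sub_three_mul_sq_mul_exp_pos (half_pos hp) hs)

lemma integral_Ioi_gauss_mul_lt_two_mul_sq (b : ℝ) (hs : 0 < s2) :
    (∫ y in Ioi 0, gauss b s2 y) * (∫ y in Ioi 0, y ^ 2 * gauss b s2 y) <
      2 * (∫ y in Ioi 0, y * gauss b s2 y) ^ 2 :=
  integral_Ioi_mul_lt_two_mul_sq_of_kernel_pos continuous_gauss
    (by simpa using (integrable_pow_mul_gauss (a := b) hs 0).integrableOn)
    (by simpa using (integrable_pow_mul_gauss (a := b) hs 1).integrableOn)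
    (integrable_pow_mul_gauss hs 2).integrableOn
    (fun _ hp => integral_moment_kernel_gauss_pos b hs hp)

lemma lowerMoment_zero_gauss_pos (hs : 0 < s2) (c : ℝ) : 0 < lowerMoment (gauss a s2) 0 c :=
  setIntegral_pos_of_ae_pos (by simp) (integrable_pow_mul_gauss hs 0).integrableOn
    (ae_of_all _ fun x => by simpa using gauss_pos hs x)

end Gaussian

lemma truncVar_eq (a s2 c : ℝ) :
    truncVar a s2 c =
      (lowerMoment (gauss a s2) 2 c * lowerMoment (gauss a s2) 0 c
        - lowerMoment (gauss a s2) 1 c ^ 2) / lowerMoment (gauss a s2) 0 c ^ 2 := by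
  have h0 : lowerMoment (gauss a s2) 0 c = ∫ x in Iic c, gauss a s2 x := by simp [lowerMoment]
  have h1 : lowerMoment (gauss a s2) 1 c = ∫ x in Iic c, x * gauss a s2 x := by simp [lowerMoment]
  have h2 : lowerMoment (gauss a s2) 2 c = ∫ x in Iic c, x ^ 2 * gauss a s2 x := rfl
  rw [truncVar, truncMean, ← h0, ← h1, ← h2]
  rcases eq_or_ne (lowerMoment (gauss a s2) 0 c) 0 with h | h
  · simp [h]
  · field_simp

section TruncVar
variable {a s2 : ℝ}

lemma truncVar_pos (hs : 0 < s2) (c : ℝ) : 0 < truncVar a s2 c := by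
  have hfi : ∀ k ≤ 2, Integrable fun x => x ^ k * gauss a s2 x :=
    fun k _ => integrable_pow_mul_gauss hs k
  have hM0 := lowerMoment_zero_gauss_pos (a := a) hs c
  rw [truncVar_eq]
  set M0 := lowerMoment (gauss a s2) 0 c
  set M1 := lowerMoment (gauss a s2) 1 c
  set M2 := lowerMoment (gauss a s2) 2 c
  set m := M1 / M0
  have hvar : 0 < ∫ x in Iic c, (1 * x ^ 2 + -2 * m * x + m ^ 2) * gauss a s2 x := by
    refine setIntegral_pos_of_ae_pos (by simp) (integrable_quadratic_mul hfi _ _ _).integrableOn ?_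
    filter_upwards [ae_restrict_of_ae (volume.ae_ne m)] with x hx
    have hxm := sub_ne_zero.2 hx
    rw [show 1 * x ^ 2 + -2 * m * x + m ^ 2 = (x - m) ^ 2 by ring]
    exact mul_pos (by positivity) (gauss_pos hs x)
  rw [integral_Iic_quadratic_mul hfi] at hvar
  have hm : m * M0 = M1 := div_mul_cancel₀ _ hM0.ne'
  have hnum : M2 * M0 - M1 ^ 2 = M0 * (1 * M2 + -2 * m * M1 + m ^ 2 * M0) := by
    linear_combination (M1 - m * M0) * hm
  rw [hnum]
  exact div_pos (mul_pos hM0 hvar) (by positivity)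

lemma truncVar_lt (hs : 0 < s2) (c : ℝ) : truncVar a s2 c < s2 := by
  have hfi : ∀ k ≤ 2, Integrable fun x => x ^ k * gauss a s2 x :=
    fun k _ => integrable_pow_mul_gauss hs k
  have hM0 := lowerMoment_zero_gauss_pos (a := a) hs c
  rw [truncVar_eq]
  have hJ : 0 < ∫ x in Iic c, (0 * x ^ 2 + -1 * x + c) * gauss a s2 x := by
    refine setIntegral_pos_of_ae_pos (by simp) (integrable_quadratic_mul hfi _ _ _).integrableOn ?_
    filter_upwards [ae_restrict_mem measurableSet_Iic, ae_restrict_of_ae (volume.ae_ne c)]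
      with x hxc hx
    exact mul_pos (by linarith [lt_of_le_of_ne (mem_Iic.1 hxc) hx]) (gauss_pos hs x)
  rw [integral_Iic_quadratic_mul hfi] at hJ
  have h1 := lowerMoment_one_gauss (a := a) hs c
  have h2 := lowerMoment_two_gauss (a := a) hs c
  set M0 := lowerMoment (gauss a s2) 0 c
  set M1 := lowerMoment (gauss a s2) 1 c
  set M2 := lowerMoment (gauss a s2) 2 c
  have hgap : s2 * M0 ^ 2 - (M2 * M0 - M1 ^ 2) = s2 * gauss a s2 c * (c * M0 - M1) := by
    linear_combination (-M0) * h2 + M1 * h1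
  have := mul_pos (mul_pos hs (gauss_pos (a := a) hs c)) (by linarith : 0 < c * M0 - M1)
  rw [div_lt_iff₀ (by positivity)]
  linarith

lemma strictMono_truncVar (hs : 0 < s2) : StrictMono (truncVar a s2) := by
  have hfi : ∀ k ≤ 2, Integrable fun x => x ^ k * gauss a s2 x :=
    fun k _ => integrable_pow_mul_gauss hs k
  rw [show truncVar a s2 = _ from funext (truncVar_eq a s2)]
  refine strictMono_of_hasDerivAt_pos (fun c => hasDerivAt_lowerMoment_variance continuous_gauss
    hfi (lowerMoment_zero_gauss_pos hs c).ne') fun c => ?_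
  have hM0 := lowerMoment_zero_gauss_pos (a := a) hs c
  have hgap := integral_Ioi_gauss_mul_lt_two_mul_sq (c - a) hs
  have e0 := integral_Ioi_quadratic_mul_sub hfi 0 0 1 c
  have e1 := integral_Ioi_quadratic_mul_sub hfi 0 1 0 c
  have e2 := integral_Ioi_quadratic_mul_sub hfi 1 0 0 c
  simp only [gauss_sub, zero_mul, one_mul, zero_add, add_zero, mul_zero, mul_one] at e0 e1 e2
  rw [e0, e1, e2] at hgap
  exact div_pos (mul_pos (gauss_pos hs c) (by linarith)) (by positivity)

end TruncVar

/-- For `X₁ ~ N(μ, σ²)`, the truncated variance `c ↦ Var[X₁ | X₁ ≤ c]` is strictly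
increasing in `c` and lies strictly between `0` and `σ²` for every `c`. -/
theorem truncated_variance_properties (μ σ : ℝ) (hσ : 0 < σ) :
    StrictMono (fun c => truncVar μ (σ ^ 2) c) ∧
    ∀ c : ℝ, 0 < truncVar μ (σ ^ 2) c ∧ truncVar μ (σ ^ 2) c < σ ^ 2 := by
  have hs : 0 < σ ^ 2 := by positivity
  exact ⟨strictMono_truncVar hs, fun c => ⟨truncVar_pos hs c, truncVar_lt hs c⟩⟩
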